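/- arXiv:2012.06963 — 8 statements merged into one kernel-verified Lean document; each statement's English description precedes it below -/
import Mathlib

section
/- Let (c_n)_{n≥1} be a sequence of complex numbers with Σ_{k=1}^∞ k·|c_k| < ∞, and define b_n = Σ_{k=1}^∞ c_{k·n} for each n ≥ 1. Then for every n ≥ 1 the series Σ_{k=1}^∞ μ(k)·b_{k·n} converges and c_n = Σ_{k=1}^∞ μ(k)·b_{k·n}. -/
open Filter ArithmeticFunction
open scoped ArithmeticFunction.Moebius Topology

/-!
The partial sum `∑_{k ≤ N} μ(k) b(kn)` expands to `∑_m A_N(m) c(mn)` with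
`A_N(m) = ∑_{d ∣ m, d ≤ N} μ(d)`. For fixed `m`, `A_N(m)` is eventually
`∑_{d ∣ m} μ(d) = [m = 1]`, and always `|A_N(m)| ≤ m`, so `m ‖c(mn)‖` is a summable majorant
and Tannery's theorem (dominated convergence for series) gives the limit `c(n)`.
-/

/-- `A_N(m)`; using `Nat.divisors` makes it vanish at `m = 0`, since `Nat.divisors 0 = ∅`. -/
def truncatedMoebiusSum (N m : ℕ) : ℤ :=
  ∑ k ∈ Finset.Icc 1 N ∩ m.divisors, μ k

theorem sum_divisors_moebius (m : ℕ) : ∑ d ∈ m.divisors, μ d = if m = 1 then 1 else 0 := by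
  have := congrArg (· m) moebius_mul_coe_zeta
  rwa [coe_mul_zeta_apply, one_apply] at this

theorem truncatedMoebiusSum_of_le {N m : ℕ} (h : m ≤ N) :
    truncatedMoebiusSum N m = if m = 1 then 1 else 0 := by
  rw [truncatedMoebiusSum, Finset.inter_eq_right.mpr, sum_divisors_moebius]
  exact fun d hd => Finset.mem_Icc.mpr ⟨Nat.pos_of_mem_divisors hd, (Nat.divisor_le hd).trans h⟩

theorem abs_truncatedMoebiusSum_le (N m : ℕ) : |truncatedMoebiusSum N m| ≤ m :=
  calc |truncatedMoebiusSum N m| ≤ ∑ k ∈ Finset.Icc 1 N ∩ m.divisors, |μ k| :=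
        Finset.abs_sum_le_sum_abs _ _
    _ ≤ ∑ k ∈ Finset.Icc 1 N ∩ m.divisors, 1 :=
        Finset.sum_le_sum fun _ _ => abs_moebius_le_one
    _ ≤ m := by
        simp only [Finset.sum_const, nsmul_eq_mul, mul_one, Nat.cast_le]
        exact (Finset.card_le_card Finset.inter_subset_right).trans m.card_divisors_le_self

theorem hasSum_ite_mem_divisors {M : Type*} [AddCommMonoid M] [TopologicalSpace M]
    {f : ℕ → M} {s : M} {k : ℕ} (hk : 0 < k) (h : HasSum (fun j => f ((j + 1) * k)) s) :
    HasSum (fun m => if k ∈ m.divisors then f m else 0) s := by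
  have hinj : Function.Injective fun j : ℕ => (j + 1) * k := fun a b hab => by
    simpa using Nat.eq_of_mul_eq_mul_right hk hab
  refine (hinj.hasSum_iff fun m hm => if_neg fun hkm => hm ?_).mp ?_
  · obtain ⟨⟨j, rfl⟩, hm0⟩ := Nat.mem_divisors.mp hkm
    have hj : 0 < j := Nat.pos_of_ne_zero (right_ne_zero_of_mul hm0)
    exact ⟨j - 1, by simp only [Nat.sub_add_cancel hj, mul_comm]⟩
  · refine h.congr_fun fun j => ?_
    simp [hk.ne']

theorem hasSum_truncatedMoebiusSum_smul {E : Type*} [AddCommGroup E] [TopologicalSpace E]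
    [IsTopologicalAddGroup E] {f g : ℕ → E}
    (hg : ∀ k, 0 < k → HasSum (fun j => f ((j + 1) * k)) (g k)) (N : ℕ) :
    HasSum (fun m => truncatedMoebiusSum N m • f m) (∑ k ∈ Finset.Icc 1 N, μ k • g k) := by
  have hterms (k : ℕ) (hk : k ∈ Finset.Icc 1 N) :
      HasSum (fun m => μ k • if k ∈ m.divisors then f m else 0) (μ k • g k) :=
    have hk0 : 0 < k := (Finset.mem_Icc.mp hk).1
    (hasSum_ite_mem_divisors hk0 (hg k hk0)).const_smul (μ k)
  refine (hasSum_sum hterms).congr_fun fun m => ?_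
  simp only [truncatedMoebiusSum, Finset.sum_smul, smul_ite, smul_zero, Finset.sum_ite_mem]

theorem tendsto_tsum_truncatedMoebiusSum_smul {E : Type*} [NormedAddCommGroup E] [CompleteSpace E]
    {f : ℕ → E} (hf : Summable fun m : ℕ => (m : ℝ) * ‖f m‖) :
    Tendsto (fun N => ∑' m, truncatedMoebiusSum N m • f m) atTop (𝓝 (f 1)) := by
  have hlim (m : ℕ) : Tendsto (fun N => truncatedMoebiusSum N m • f m) atTop
      (𝓝 (if m = 1 then f 1 else 0)) := by
    refine tendsto_const_nhds.congr' ?_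
    filter_upwards [eventually_ge_atTop m] with N hN
    rw [truncatedMoebiusSum_of_le hN]
    split_ifs with h <;> simp [h]
  have hbound (N m : ℕ) : ‖truncatedMoebiusSum N m • f m‖ ≤ m * ‖f m‖ := by
    calc ‖truncatedMoebiusSum N m • f m‖ ≤ ‖truncatedMoebiusSum N m‖ * ‖f m‖ :=
          norm_zsmul_le _ _
      _ ≤ m * ‖f m‖ := by
        gcongr
        rw [Int.norm_eq_abs]
        exact_mod_cast abs_truncatedMoebiusSum_le N m
  simpa using tendsto_tsum_of_dominated_convergence hf hlim (.of_forall hbound)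

theorem tendsto_sum_moebius_smul {E : Type*} [NormedAddCommGroup E] [CompleteSpace E]
    {f g : ℕ → E} (hf : Summable fun m : ℕ => (m : ℝ) * ‖f m‖)
    (hg : ∀ k, 0 < k → HasSum (fun j => f ((j + 1) * k)) (g k)) :
    Tendsto (fun N => ∑ k ∈ Finset.Icc 1 N, μ k • g k) atTop (𝓝 (f 1)) := by
  simpa only [fun N => (hasSum_truncatedMoebiusSum_smul hg N).tsum_eq]
    using tendsto_tsum_truncatedMoebiusSum_smul hf

/-- **Möbius inversion for series (Theorem 1).**
If `(cₙ)` is a sequence of complex numbers with `∑ k·|cₖ| < ∞`, and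
`bₙ = ∑_{k=1}^∞ c_{k·n}`, then for every `n ≥ 1` the series
`∑_{k=1}^∞ μ(k)·b_{k·n}` converges and equals `cₙ`. -/
theorem moebius_inversion_of_summable_smul
    (c b : ℕ → ℂ)
    (hc : Summable fun k : ℕ => (k : ℝ) * ‖c k‖)
    (hb : ∀ n : ℕ, 1 ≤ n → HasSum (fun k : ℕ => c ((k + 1) * n)) (b n)) :
    ∀ n : ℕ, 1 ≤ n →
      Tendsto (fun N : ℕ => ∑ k ∈ Finset.Icc 1 N, (moebius k : ℂ) * b (k * n))
        atTop (nhds (c n)) := by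
  intro n hn
  have hinj : Function.Injective fun m : ℕ => m * n := fun _ _ => Nat.eq_of_mul_eq_mul_right hn
  have hf : Summable fun m : ℕ => (m : ℝ) * ‖c (m * n)‖ := by
    refine (hc.comp_injective hinj).of_nonneg_of_le (fun m => by positivity) fun m => ?_
    simp only [Function.comp_apply, Nat.cast_mul]
    exact mul_le_mul_of_nonneg_right (le_mul_of_one_le_right m.cast_nonneg (by exact_mod_cast hn))
      (norm_nonneg _)
  have hg (k : ℕ) (hk : 0 < k) : HasSum (fun j => c ((j + 1) * k * n)) (b (k * n)) := by
    simpa only [mul_assoc] using hb (k * n) (Nat.mul_pos hk hn)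
  simpa [zsmul_eq_mul] using tendsto_sum_moebius_smul hf hg
end

section
/- Let (c_n)_{n≥1} be a sequence of complex numbers such that Σ_{n=1}^∞ 2^{v(n)}·|c_n| < ∞, where v(n) denotes the number of distinct prime divisors of n, and define b_n = Σ_{k=1}^∞ c_{k·n} for each n ≥ 1. Then for every n ≥ 1 the series Σ_{k=1}^∞ μ(k)·b_{k·n} converges and c_n = Σ_{k=1}^∞ μ(k)·b_{k·n}. -/
/-!
Expanding `b`, the partial sum `∑_{k ≤ N} μ(k) b(kn)` is the series `∑_j M_N(j) c(jn)` with
`M_N(j) = ∑_{k ≤ N, k ∣ j} μ(k)`. For fixed `j ≥ 1` this truncated divisor sum equals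
`∑_{d ∣ j} μ(d) = [j = 1]` as soon as `N ≥ j`, and always `|M_N(j)| ≤ ∑_{d ∣ j} |μ(d)| = 2^ω(j)`,
which is at most `2^ω(jn)`. Wintner's condition therefore provides a summable majorant, and
dominated convergence for series (Tannery's theorem) lets `N → ∞` termwise.
-/

open Filter ArithmeticFunction Finset
open scoped ArithmeticFunction.omega ArithmeticFunction.Moebius Topology

theorem Nat.filter_dvd_Icc_eq_filter_le_divisors {m : ℕ} (hm : m ≠ 0) (N : ℕ) :
    {k ∈ Icc 1 N | k ∣ m} = {d ∈ m.divisors | d ≤ N} := by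
  ext k
  simp only [mem_filter, mem_Icc, Nat.mem_divisors]
  constructor
  · rintro ⟨⟨-, hkN⟩, hkm⟩
    exact ⟨⟨hkm, hm⟩, hkN⟩
  · rintro ⟨⟨hkm, -⟩, hkN⟩
    exact ⟨⟨Nat.pos_of_dvd_of_pos hkm (Nat.pos_of_ne_zero hm), hkN⟩, hkm⟩

namespace ArithmeticFunction

theorem cardDistinctFactors_eq_card_primeFactors (m : ℕ) : ω m = m.primeFactors.card := by
  rw [cardDistinctFactors_apply, ← List.card_toFinset, Nat.toFinset_factors]

theorem cardDistinctFactors_le_of_dvd {a b : ℕ} (h : a ∣ b) (hb : b ≠ 0) : ω a ≤ ω b := by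
  simp only [cardDistinctFactors_eq_card_primeFactors]
  exact card_le_card (Nat.primeFactors_mono h hb)

theorem sum_divisors_moebius (m : ℕ) : ∑ d ∈ m.divisors, μ d = if m = 1 then 1 else 0 := by
  rw [← coe_mul_zeta_apply, moebius_mul_coe_zeta, one_apply]

-- The squarefree divisors of `m` are the products of the subsets of its prime factors.
theorem sum_divisors_abs_moebius {m : ℕ} (hm : m ≠ 0) : ∑ d ∈ m.divisors, |μ d| = 2 ^ ω m := by
  simp_rw [abs_moebius]
  rw [← sum_filter, Nat.sum_divisors_filter_squarefree hm, sum_const, card_powerset,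
    Nat.factors_eq, nsmul_one, cardDistinctFactors_eq_card_primeFactors, ← Nat.toFinset_factors]
  norm_cast

theorem sum_moebius_filter_dvd_Icc_of_le {m N : ℕ} (hm : m ≠ 0) (hmN : m ≤ N) :
    ∑ k ∈ Icc 1 N with k ∣ m, μ k = if m = 1 then 1 else 0 := by
  rw [Nat.filter_dvd_Icc_eq_filter_le_divisors hm,
    filter_true_of_mem fun d hd => (Nat.divisor_le hd).trans hmN, sum_divisors_moebius]

theorem abs_sum_moebius_filter_dvd_Icc_le {m : ℕ} (hm : m ≠ 0) (N : ℕ) :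
    |∑ k ∈ Icc 1 N with k ∣ m, μ k| ≤ 2 ^ ω m :=
  calc |∑ k ∈ Icc 1 N with k ∣ m, μ k|
      ≤ ∑ k ∈ Icc 1 N with k ∣ m, |μ k| := abs_sum_le_sum_abs _ _
    _ ≤ ∑ d ∈ m.divisors, |μ d| := by
      rw [Nat.filter_dvd_Icc_eq_filter_le_divisors hm]
      exact sum_le_sum_of_subset_of_nonneg (filter_subset _ _) fun _ _ _ => abs_nonneg _
    _ = 2 ^ ω m := sum_divisors_abs_moebius hm

end ArithmeticFunction

theorem hasSum_comp_mul_right_iff_ite_dvd {M : Type*} [AddCommMonoid M] [TopologicalSpace M]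
    {f : ℕ → M} {d : ℕ} (hd : d ≠ 0) {a : M} :
    HasSum (fun i => f (i * d)) a ↔ HasSum (fun j => if d ∣ j then f j else 0) a := by
  have hvanish : ∀ j ∉ Set.range (· * d), (if d ∣ j then f j else 0) = 0 := by
    rintro j hj
    rw [if_neg]
    rintro ⟨i, rfl⟩
    exact hj ⟨i, mul_comm i d⟩
  rw [← (mul_left_injective₀ hd).hasSum_iff hvanish]
  simp only [Function.comp_def, dvd_mul_left, if_true]

section Inversion

variable {E : Type*}

theorem hasSum_sum_Icc_moebius_smul [AddCommGroup E] [TopologicalSpace E]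
    [IsTopologicalAddGroup E] {f b : ℕ → E} (hb : ∀ m ≠ 0, HasSum (fun j => f (j * m)) (b m))
    {n : ℕ} (hn : n ≠ 0) (N : ℕ) :
    HasSum (fun j => (∑ k ∈ Icc 1 N with k ∣ j, μ k) • f (j * n))
      (∑ k ∈ Icc 1 N, μ k • b (k * n)) := by
  have hterm : ∀ k ∈ Icc 1 N,
      HasSum (fun j => if k ∣ j then μ k • f (j * n) else 0) (μ k • b (k * n)) := by
    intro k hk
    have hk0 : k ≠ 0 := Nat.one_le_iff_ne_zero.mp (mem_Icc.mp hk).1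
    rw [← hasSum_comp_mul_right_iff_ite_dvd hk0]
    simpa only [mul_assoc] using (hb (k * n) (mul_ne_zero hk0 hn)).const_smul (μ k)
  simpa only [sum_filter, sum_smul, ite_smul, zero_smul] using hasSum_sum hterm

/-- `f` is a sequence indexed by the positive integers, extended by `f 0 = 0`. -/
theorem tendsto_sum_Icc_moebius_smul [NormedAddCommGroup E] [CompleteSpace E] {f b : ℕ → E}
    (hf0 : f 0 = 0) (hf : Summable fun m => (2 : ℝ) ^ ω m * ‖f m‖)
    (hb : ∀ m ≠ 0, HasSum (fun j => f (j * m)) (b m)) {n : ℕ} (hn : n ≠ 0) :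
    Tendsto (fun N => ∑ k ∈ Icc 1 N, μ k • b (k * n)) atTop (𝓝 (f n)) := by
  set a : ℕ → ℕ → E := fun N j => (∑ k ∈ Icc 1 N with k ∣ j, μ k) • f (j * n) with ha
  have hlim : ∀ j, Tendsto (fun N => a N j) atTop (𝓝 (if j = 1 then f n else 0)) := by
    intro j
    rcases eq_or_ne j 0 with rfl | hj
    · simp [ha, hf0]
    refine tendsto_const_nhds.congr' ?_
    filter_upwards [eventually_ge_atTop j] with N hN
    simp only [ha, sum_moebius_filter_dvd_Icc_of_le hj hN]
    split_ifs with h1 <;> simp [h1]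
  have hbound : ∀ N j, ‖a N j‖ ≤ 2 ^ ω (j * n) * ‖f (j * n)‖ := by
    intro N j
    rcases eq_or_ne j 0 with rfl | hj
    · simp [ha, hf0]
    have hcoeff : ‖∑ k ∈ Icc 1 N with k ∣ j, μ k‖ ≤ (2 : ℝ) ^ ω j := by
      rw [Int.norm_eq_abs]
      exact_mod_cast abs_sum_moebius_filter_dvd_Icc_le hj N
    calc ‖a N j‖ ≤ ‖∑ k ∈ Icc 1 N with k ∣ j, μ k‖ * ‖f (j * n)‖ := norm_zsmul_le _ _
      _ ≤ 2 ^ ω j * ‖f (j * n)‖ := by gcongr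
      _ ≤ 2 ^ ω (j * n) * ‖f (j * n)‖ := by
        gcongr
        · exact one_le_two
        · exact cardDistinctFactors_le_of_dvd (dvd_mul_right j n) (mul_ne_zero hj hn)
  have hsummable : Summable fun j => (2 : ℝ) ^ ω (j * n) * ‖f (j * n)‖ :=
    hf.comp_injective (mul_left_injective₀ hn)
  have hdom := tendsto_tsum_of_dominated_convergence hsummable hlim (.of_forall hbound)
  rw [tsum_ite_eq] at hdom
  exact hdom.congr fun N => (hasSum_sum_Icc_moebius_smul hb hn N).tsum_eq

end Inversion

/-- **Möbius inversion under Wintner's condition.**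
If `(cₙ)` satisfies `∑ 2^{v(n)}·|cₙ| < ∞`, where `v(n)` is the number of distinct
prime divisors of `n`, and `bₙ = ∑_{k=1}^∞ c_{k·n}`, then for every `n ≥ 1` the
series `∑_{k=1}^∞ μ(k)·b_{k·n}` converges and equals `cₙ`. -/
theorem moebius_inversion_of_summable_two_pow_cardDistinctFactors
    (c b : ℕ → ℂ)
    (hc : Summable fun n : ℕ =>
      (2 : ℝ) ^ (cardDistinctFactors (n + 1)) * ‖c (n + 1)‖)
    (hb : ∀ n : ℕ, 1 ≤ n → HasSum (fun k : ℕ => c ((k + 1) * n)) (b n)) :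
    ∀ n : ℕ, 1 ≤ n →
      Tendsto (fun N : ℕ => ∑ k ∈ Finset.Icc 1 N, (moebius k : ℂ) * b (k * n))
        atTop (nhds (c n)) := by
  intro n hn
  set f : ℕ → ℂ := fun m => if m = 0 then 0 else c m
  have hf0 : f 0 = 0 := if_pos rfl
  have hf_succ : ∀ m, f (m + 1) = c (m + 1) := fun m => if_neg m.succ_ne_zero
  have hf_summable : Summable fun m => (2 : ℝ) ^ ω m * ‖f m‖ := by
    rw [← summable_nat_add_iff 1]
    simpa only [hf_succ] using hc
  have hfb : ∀ m ≠ 0, HasSum (fun j => f (j * m)) (b m) := by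
    intro m hm
    rw [← hasSum_nat_add_iff' 1]
    have hshift : ∀ j, f ((j + 1) * m) = c ((j + 1) * m) := fun j =>
      if_neg (mul_ne_zero j.succ_ne_zero hm)
    simpa only [hshift, range_one, sum_singleton, zero_mul, hf0, sub_zero] using
      hb m (Nat.one_le_iff_ne_zero.mpr hm)
  have hn0 : n ≠ 0 := Nat.one_le_iff_ne_zero.mp hn
  have hinv := tendsto_sum_Icc_moebius_smul hf0 hf_summable hfb hn0
  rw [show f n = c n from if_neg hn0] at hinv
  simpa only [zsmul_eq_mul] using hinv
end

section
/- Let (c_n)_{n≥1} be a sequence of complex numbers such that Σ_{n=1}^∞ n^ε·|c_n| < ∞ for some ε > 0, and define b_n = Σ_{k=1}^∞ c_{k·n} for each n ≥ 1. Then for every n ≥ 1 the series Σ_{k=1}^∞ μ(k)·b_{k·n} converges and c_n = Σ_{k=1}^∞ μ(k)·b_{k·n}. -/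
/-!
Exchanging the two summations, the `N`-th partial sum of `∑ μ(k) b_{kn}` becomes
`∑_m w_N(m) c_{mn}` with `w_N(m) = ∑_{k ≤ N, k ∣ m} μ(k)`. For `N ≥ m` this weight is `[m = 1]`,
and for all `N` it is bounded by the number `2^ω(m)` of squarefree divisors of `m`, which is
`O(m^ε)`. The hypothesis `∑ n^ε |c_n| < ∞` therefore provides a summable majorant, and dominated
convergence for series gives the limit `c_n`.
-/

open Filter ArithmeticFunction Finset
open scoped ArithmeticFunction.Moebius

theorem Nat.card_divisors_filter_squarefree {m : ℕ} (hm : m ≠ 0) :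
    #{d ∈ m.divisors | Squarefree d} = 2 ^ #m.primeFactors := by
  rw [card_eq_sum_ones, Nat.sum_divisors_filter_squarefree hm, ← card_eq_sum_ones,
    card_powerset, Nat.factors_eq]
  rfl

theorem abs_sum_moebius_filter_dvd_le (s : Finset ℕ) {m : ℕ} (hm : m ≠ 0) :
    |∑ k ∈ s with k ∣ m, μ k| ≤ 2 ^ #m.primeFactors := by
  calc |∑ k ∈ s with k ∣ m, μ k|
      ≤ ∑ k ∈ s with k ∣ m, |μ k| := abs_sum_le_sum_abs _ _
    _ ≤ ∑ k ∈ m.divisors, |μ k| :=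
        sum_le_sum_of_subset_of_nonneg
          (fun k hk => Nat.mem_divisors.mpr ⟨(mem_filter.mp hk).2, hm⟩)
          (fun _ _ _ => abs_nonneg _)
    _ = 2 ^ #m.primeFactors := by
        simp only [abs_moebius, sum_boole, Nat.card_divisors_filter_squarefree hm, Nat.cast_pow,
          Nat.cast_ofNat]

theorem sum_moebius_filter_dvd_of_le {m N : ℕ} (hm : m ≠ 0) (hmN : m ≤ N) :
    ∑ k ∈ Icc 1 N with k ∣ m, μ k = if m = 1 then 1 else 0 := by
  have hdiv : {k ∈ Icc 1 N | k ∣ m} = m.divisors := by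
    ext k
    simp only [mem_filter, mem_Icc, Nat.mem_divisors]
    constructor
    · rintro ⟨-, hk⟩
      exact ⟨hk, hm⟩
    · rintro ⟨hk, -⟩
      exact ⟨⟨Nat.pos_of_dvd_of_pos hk (Nat.pos_of_ne_zero hm),
        (Nat.le_of_dvd (Nat.pos_of_ne_zero hm) hk).trans hmN⟩, hk⟩
  rw [hdiv, ← coe_mul_zeta_apply, moebius_mul_coe_zeta, one_apply]

theorem prod_primeFactors_rpow_le {r : ℕ} (hr : r ≠ 0) {ε : ℝ} (hε : 0 ≤ ε) :
    ∏ p ∈ r.primeFactors, (p : ℝ) ^ ε ≤ (r : ℝ) ^ ε := by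
  rw [Real.finsetProd_rpow _ _ (fun _ _ => Nat.cast_nonneg _)]
  gcongr
  rw [← Nat.cast_prod]
  exact_mod_cast Nat.le_of_dvd (Nat.pos_of_ne_zero hr) (Nat.prod_primeFactors_dvd r)

theorem exists_two_pow_card_primeFactors_le {ε : ℝ} (hε : 0 < ε) :
    ∃ C : ℝ, ∀ r : ℕ, r ≠ 0 → (2 : ℝ) ^ #r.primeFactors ≤ C * (r : ℝ) ^ ε := by
  -- Primes `p ≥ P` satisfy `2 ≤ p ^ ε`; the fewer than `P` smaller ones cost at most `2 ^ P`.
  set P := ⌈(2 : ℝ) ^ ε⁻¹⌉₊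
  have two_le_rpow {p : ℕ} (hp : P ≤ p) : (2 : ℝ) ≤ (p : ℝ) ^ ε := by
    calc (2 : ℝ) = ((2 : ℝ) ^ ε⁻¹) ^ ε := by
          rw [← Real.rpow_mul zero_le_two, inv_mul_cancel₀ hε.ne', Real.rpow_one]
      _ ≤ (p : ℝ) ^ ε := by
          gcongr
          exact (Nat.le_ceil _).trans (by exact_mod_cast hp)
  refine ⟨2 ^ P, fun r hr => ?_⟩
  have one_le_rpow {p : ℕ} (hp : p ∈ r.primeFactors) : (1 : ℝ) ≤ (p : ℝ) ^ ε :=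
    Real.one_le_rpow (by exact_mod_cast (Nat.prime_of_mem_primeFactors hp).one_le) hε.le
  have small_card : #{p ∈ r.primeFactors | p < P} ≤ P :=
    (card_le_card fun p hp => mem_range.mpr (mem_filter.mp hp).2).trans_eq (card_range P)
  calc (2 : ℝ) ^ #r.primeFactors
      = (∏ p ∈ r.primeFactors with p < P, (2 : ℝ)) * ∏ p ∈ r.primeFactors with ¬p < P, (2 : ℝ) := by
        rw [prod_filter_mul_prod_filter_not, prod_const]
    _ ≤ 2 ^ P * ∏ p ∈ r.primeFactors with ¬p < P, (p : ℝ) ^ ε := by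
        rw [prod_const]
        gcongr with p hp
        · exact one_le_two
        · exact two_le_rpow (not_lt.mp (mem_filter.mp hp).2)
    _ ≤ 2 ^ P * ∏ p ∈ r.primeFactors, (p : ℝ) ^ ε := by
        gcongr
        · exact fun p hp _ => one_le_rpow hp
        · exact filter_subset _ _
    _ ≤ 2 ^ P * (r : ℝ) ^ ε := by
        gcongr
        exact prod_primeFactors_rpow_le hr hε.le

theorem hasSum_ite_dvd_succ_iff {E : Type*} [AddCommMonoid E] [TopologicalSpace E] {f : ℕ → E}
    {k : ℕ} (hk : k ≠ 0) {x : E} :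
    HasSum (fun m => if k ∣ m + 1 then f (m + 1) else 0) x ↔
      HasSum (fun j => f ((j + 1) * k)) x := by
  set g : ℕ → ℕ := fun j => (j + 1) * k - 1
  have hg (j : ℕ) : g j + 1 = (j + 1) * k :=
    Nat.sub_add_cancel (Nat.one_le_iff_ne_zero.mpr (mul_ne_zero j.succ_ne_zero hk))
  have hg_inj : Function.Injective g := fun i j hij => by
    have : (i + 1) * k = (j + 1) * k := by rw [← hg i, ← hg j, hij]
    exact Nat.succ_injective (Nat.eq_of_mul_eq_mul_right (Nat.pos_of_ne_zero hk) this)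
  have hg_range (m : ℕ) (hm : m ∉ Set.range g) : (if k ∣ m + 1 then f (m + 1) else 0) = 0 := by
    refine if_neg fun ⟨q, hq⟩ => hm ⟨q - 1, Nat.add_right_cancel (m := 1) ?_⟩
    have hq0 : q ≠ 0 := by rintro rfl; simp at hq
    rw [hg, Nat.sub_add_cancel (Nat.one_le_iff_ne_zero.mpr hq0), hq, mul_comm]
  rw [← hg_inj.hasSum_iff hg_range]
  congr! 1
  ext j
  simp only [Function.comp_apply, hg, dvd_mul_left, if_true]

theorem tendsto_sum_moebius_smul_of_hasSum {E : Type*} [NormedAddCommGroup E] [CompleteSpace E]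
    {a B : ℕ → E} {ε : ℝ} (hε : 0 < ε)
    (ha : Summable fun m : ℕ => ((m + 1 : ℕ) : ℝ) ^ ε * ‖a (m + 1)‖)
    (hB : ∀ k, 1 ≤ k → HasSum (fun j => a ((j + 1) * k)) (B k)) :
    Tendsto (fun N => ∑ k ∈ Icc 1 N, μ k • B k) atTop (nhds (a 1)) := by
  obtain ⟨C, hC⟩ := exists_two_pow_card_primeFactors_le hε
  set w : ℕ → ℕ → ℤ := fun N m => ∑ k ∈ Icc 1 N with k ∣ m + 1, μ k
  have partial_sum_eq (N : ℕ) : ∑ k ∈ Icc 1 N, μ k • B k = ∑' m, w N m • a (m + 1) := by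
    refine (HasSum.tsum_eq ?_).symm
    convert hasSum_sum fun k hk => ((hasSum_ite_dvd_succ_iff (f := a)
      (Nat.one_le_iff_ne_zero.mp (mem_Icc.mp hk).1)).mpr (hB k (mem_Icc.mp hk).1)).const_smul (μ k)
      using 2 with m
    simp only [w, sum_filter, sum_smul, ite_smul, zero_smul, smul_ite, smul_zero]
  simp only [partial_sum_eq]
  rw [← tsum_ite_eq 0 (fun _ => a 1)]
  refine tendsto_tsum_of_dominated_convergence (ha.mul_left C) (fun m => ?_)
    (Eventually.of_forall fun N m => ?_)
  · refine tendsto_const_nhds.congr' (eventually_atTop.mpr ⟨m + 1, fun N hN => ?_⟩)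
    simp only [w, sum_moebius_filter_dvd_of_le m.succ_ne_zero hN]
    rcases m with _ | m <;> simp
  · calc ‖w N m • a (m + 1)‖ ≤ ‖w N m‖ * ‖a (m + 1)‖ := norm_zsmul_le _ _
      _ ≤ 2 ^ #(m + 1).primeFactors * ‖a (m + 1)‖ := by
        gcongr
        rw [Int.norm_eq_abs]
        exact_mod_cast abs_sum_moebius_filter_dvd_le _ m.succ_ne_zero
      _ ≤ C * ((m + 1 : ℕ) : ℝ) ^ ε * ‖a (m + 1)‖ := by gcongr; exact hC _ m.succ_ne_zero
      _ = C * (((m + 1 : ℕ) : ℝ) ^ ε * ‖a (m + 1)‖) := mul_assoc _ _ _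

/-- **Möbius inversion under a polynomial-weight condition.**
If `(cₙ)` satisfies `∑ n^ε·|cₙ| < ∞` for some `ε > 0`, and `bₙ = ∑_{k=1}^∞ c_{k·n}`,
then for every `n ≥ 1` the series `∑_{k=1}^∞ μ(k)·b_{k·n}` converges and equals `cₙ`. -/
theorem moebius_inversion_of_summable_rpow
    (c b : ℕ → ℂ)
    (hc : ∃ ε : ℝ, 0 < ε ∧ Summable fun n : ℕ => (n : ℝ) ^ ε * ‖c n‖)
    (hb : ∀ n : ℕ, 1 ≤ n → HasSum (fun k : ℕ => c ((k + 1) * n)) (b n)) :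
    ∀ n : ℕ, 1 ≤ n →
      Tendsto (fun N : ℕ => ∑ k ∈ Finset.Icc 1 N, (moebius k : ℂ) * b (k * n))
        atTop (nhds (c n)) := by
  obtain ⟨ε, hε, hsum⟩ := hc
  intro n hn
  have hmul_inj : Function.Injective fun m : ℕ => (m + 1) * n := fun i j hij =>
    Nat.succ_injective (Nat.eq_of_mul_eq_mul_right hn hij)
  have hsum_mul : Summable fun m : ℕ => ((m + 1 : ℕ) : ℝ) ^ ε * ‖c ((m + 1) * n)‖ :=
    (hsum.comp_injective hmul_inj).of_nonneg_of_le (fun m => by positivity) fun m => by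
      dsimp only [Function.comp_apply]
      gcongr
      exact_mod_cast Nat.le_mul_of_pos_right _ hn
  have hb_mul (k : ℕ) (hk : 1 ≤ k) : HasSum (fun j => c ((j + 1) * k * n)) (b (k * n)) := by
    simpa only [mul_assoc] using hb (k * n) (Nat.mul_pos hk hn)
  simpa only [zsmul_eq_mul, one_mul] using
    tendsto_sum_moebius_smul_of_hasSum (a := fun m => c (m * n)) hε hsum_mul hb_mul
end

section
/- Let f : ℝ → ℝ be a function of period 1 that is differentiable with derivative f′ satisfying |f′(x) − f′(y)| ≤ C·|x − y| for all x, y ∈ ℝ. Then for every x ∈ ℝ and every positive integer n, |∫_0^1 f(t) dt − (1/n)·Σ_{m=1}^{n} f(x + m/n)| ≤ C/n². -/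
/-!
Over a period, the right-endpoint Riemann sum with step `h` coincides with the trapezoidal sum,
so it suffices to bound the trapezoidal error on each cell `[a, b]`. As a function of `b`, the
error `∫ t in a..b, f t - (b - a) * (f a + f b) / 2` has derivative
`-(f a - f b - (a - b) * f' b) / 2`, a first-order Taylor remainder, which is at most
`C * h ^ 2 / 2` because `f'` is `C`-Lipschitz. Hence each cell contributes at most `C * h ^ 3 / 2`,
and the `n` cells of step `1 / n` at most `C / (2 * n ^ 2)`.
-/

section LipschitzDeriv

variable {f f' : ℝ → ℝ} {C : ℝ}

lemma nonneg_of_forall_abs_sub_le_mul_abs_sub {g : ℝ → ℝ}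
    (hg : ∀ x y, |g x - g y| ≤ C * |x - y|) : 0 ≤ C := by
  simpa using (abs_nonneg _).trans (hg 0 1)

lemma abs_sub_sub_mul_le_of_lipschitz_deriv (hderiv : ∀ x, HasDerivAt f (f' x) x)
    (hlip : ∀ x y, |f' x - f' y| ≤ C * |x - y|) (x y : ℝ) :
    |f y - f x - (y - x) * f' x| ≤ C * (y - x) ^ 2 := by
  have hC := nonneg_of_forall_abs_sub_le_mul_abs_sub hlip
  have hg : ∀ u ∈ Set.uIcc x y,
      HasDerivWithinAt (fun v ↦ f v - v * f' x) (f' u - f' x) (Set.uIcc x y) u := fun u _ ↦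
    ((hderiv u).sub (by simpa using (hasDerivAt_id u).mul_const (f' x))).hasDerivWithinAt
  have hbound : ∀ u ∈ Set.uIcc x y, ‖f' u - f' x‖ ≤ C * |y - x| := fun u hu ↦
    (hlip u x).trans (mul_le_mul_of_nonneg_left (Set.abs_sub_left_of_mem_uIcc hu) hC)
  have := (convex_uIcc x y).norm_image_sub_le_of_norm_hasDerivWithin_le hg hbound
    Set.left_mem_uIcc Set.right_mem_uIcc
  rw [Real.norm_eq_abs, Real.norm_eq_abs] at this
  calc |f y - f x - (y - x) * f' x| = |f y - y * f' x - (f x - x * f' x)| := by ring_nf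
    _ ≤ C * |y - x| * |y - x| := this
    _ = C * (y - x) ^ 2 := by rw [mul_assoc, ← sq, sq_abs]

lemma abs_integral_sub_trapezoid_le (hderiv : ∀ x, HasDerivAt f (f' x) x)
    (hlip : ∀ x y, |f' x - f' y| ≤ C * |x - y|) (a b : ℝ) :
    |(∫ t in a..b, f t) - (b - a) * ((f a + f b) / 2)| ≤ C * |b - a| ^ 3 / 2 := by
  have hf : Continuous f := continuous_iff_continuousAt.2 fun x ↦ (hderiv x).continuousAt
  set φ : ℝ → ℝ := fun u ↦ (∫ t in a..u, f t) - (u - a) * ((f a + f u) / 2)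
  have hφ : ∀ u ∈ Set.uIcc a b, HasDerivWithinAt φ
      (-(f a - f u - (a - u) * f' u) / 2) (Set.uIcc a b) u := by
    intro u _
    have hd : HasDerivAt φ (f u - (1 * ((f a + f u) / 2) + (u - a) * (f' u / 2))) u :=
      (hf.integral_hasStrictDerivAt a u).hasDerivAt.sub
        (((hasDerivAt_id u).sub_const a).mul (((hderiv u).const_add (f a)).div_const 2))
    exact (hd.congr_deriv (by ring)).hasDerivWithinAt
  have hbound :
      ∀ u ∈ Set.uIcc a b, ‖-(f a - f u - (a - u) * f' u) / 2‖ ≤ C * |b - a| ^ 2 / 2 := by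
    intro u hu
    have hC := nonneg_of_forall_abs_sub_le_mul_abs_sub hlip
    have hau : (a - u) ^ 2 ≤ |b - a| ^ 2 := by
      rw [← sq_abs, abs_sub_comm]
      exact pow_le_pow_left₀ (abs_nonneg _) (Set.abs_sub_left_of_mem_uIcc hu) 2
    rw [Real.norm_eq_abs, abs_div, abs_neg, abs_two]
    gcongr
    exact (abs_sub_sub_mul_le_of_lipschitz_deriv hderiv hlip u a).trans (by gcongr)
  have := (convex_uIcc a b).norm_image_sub_le_of_norm_hasDerivWithin_le hφ hbound
    Set.left_mem_uIcc Set.right_mem_uIcc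
  rw [Real.norm_eq_abs, Real.norm_eq_abs, show φ a = 0 by simp [φ], sub_zero] at this
  calc |(∫ t in a..b, f t) - (b - a) * ((f a + f b) / 2)| = |φ b| := rfl
    _ ≤ C * |b - a| ^ 2 / 2 * |b - a| := this
    _ = C * |b - a| ^ 3 / 2 := by ring

lemma abs_integral_sub_riemann_sum_le (hderiv : ∀ x, HasDerivAt f (f' x) x)
    (hlip : ∀ x y, |f' x - f' y| ≤ C * |x - y|) {x h : ℝ} {n : ℕ}
    (hend : f (x + n * h) = f x) :
    |(∫ t in x..x + n * h, f t) - h * ∑ i ∈ Finset.range n, f (x + (i + 1) * h)|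
      ≤ n * (C * |h| ^ 3 / 2) := by
  have hf : Continuous f := continuous_iff_continuousAt.2 fun x ↦ (hderiv x).continuousAt
  set a : ℕ → ℝ := fun i ↦ x + i * h
  have hstep (i : ℕ) : a (i + 1) - a i = h := by simp only [a]; push_cast; ring
  have hintegral :
      ∫ t in x..x + n * h, f t = ∑ i ∈ Finset.range n, ∫ t in a i..a (i + 1), f t := by
    rw [intervalIntegral.sum_integral_adjacent_intervals fun _ _ ↦ hf.intervalIntegrable _ _]
    simp [a]
  have hsum : h * ∑ i ∈ Finset.range n, f (x + (i + 1) * h)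
      = ∑ i ∈ Finset.range n, (a (i + 1) - a i) * ((f (a i) + f (a (i + 1))) / 2) := by
    have hshift : ∑ i ∈ Finset.range n, f (a (i + 1)) = ∑ i ∈ Finset.range n, f (a i) := by
      have := Finset.sum_range_succ' (fun i ↦ f (a i)) n
      rw [Finset.sum_range_succ] at this
      simp only [a, Nat.cast_zero, zero_mul, add_zero] at this
      linarith
    have hright (i : ℕ) : f (x + (i + 1) * h) = f (a (i + 1)) := by
      simp only [a]; push_cast; rfl
    simp only [hstep, hright, ← Finset.mul_sum, add_div, Finset.sum_add_distrib, ← Finset.sum_div,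
      hshift]
    ring
  rw [hintegral, hsum, ← Finset.sum_sub_distrib]
  calc _ ≤ ∑ i ∈ Finset.range n,
        |(∫ t in a i..a (i + 1), f t) - (a (i + 1) - a i) * ((f (a i) + f (a (i + 1))) / 2)| :=
        Finset.abs_sum_le_sum_abs _ _
    _ ≤ ∑ i ∈ Finset.range n, C * |h| ^ 3 / 2 := by
        gcongr with i
        simpa only [hstep] using abs_integral_sub_trapezoid_le hderiv hlip (a i) (a (i + 1))
    _ = n * (C * |h| ^ 3 / 2) := by simp

end LipschitzDeriv

/-- **Wintner's estimate (Proposition 1).**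
If `f : ℝ → ℝ` has period 1 and is differentiable with derivative `f'` satisfying
a Lipschitz condition with constant `C`, then for every `x` and every `n ≥ 1`,
`|∫_0^1 f(t) dt − (1/n)·∑_{m=1}^n f(x + m/n)| ≤ C/n²`. -/
theorem abs_integral_sub_average_le
    (f f' : ℝ → ℝ) (C : ℝ)
    (hper : Function.Periodic f 1)
    (hderiv : ∀ x : ℝ, HasDerivAt f (f' x) x)
    (hlip : ∀ x y : ℝ, |f' x - f' y| ≤ C * |x - y|) :
    ∀ x : ℝ, ∀ n : ℕ, 1 ≤ n →
      |(∫ t in (0:ℝ)..1, f t) -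
        (1 / (n : ℝ)) * ∑ m ∈ Finset.Icc 1 n, f (x + (m : ℝ) / n)| ≤ C / (n : ℝ) ^ 2 := by
  intro x n hn
  have hn' : (0 : ℝ) < n := by exact_mod_cast hn
  have hperiod : n * (1 / (n : ℝ)) = 1 := mul_one_div_cancel hn'.ne'
  have hreindex : ∑ m ∈ Finset.Icc 1 n, f (x + (m : ℝ) / n)
      = ∑ i ∈ Finset.range n, f (x + (i + 1) * (1 / n)) := calc
    _ = ∑ i ∈ Finset.range n, f (x + ((i + 1 : ℕ) : ℝ) / n) := by
      rw [Finset.range_eq_Ico, Finset.sum_Ico_add' (fun m : ℕ ↦ f (x + (m : ℝ) / n)) 0 n 1]; rfl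
    _ = _ := Finset.sum_congr rfl fun i _ ↦ by push_cast; ring_nf
  have hshift : ∫ t in (0 : ℝ)..1, f t = ∫ t in x..x + n * (1 / n), f t := by
    rw [hperiod, ← hper.intervalIntegral_add_eq 0 x, zero_add]
  rw [hreindex, hshift]
  calc _ ≤ n * (C * |1 / (n : ℝ)| ^ 3 / 2) :=
        abs_integral_sub_riemann_sum_le hderiv hlip (by rw [hperiod]; exact hper x)
    _ ≤ C / (n : ℝ) ^ 2 := by
        have hC := nonneg_of_forall_abs_sub_le_mul_abs_sub hlip
        rw [abs_of_pos (by positivity)]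
        field_simp
        nlinarith
end

section
/- Let f be a complex function analytic on an open set containing the closed unit disk {z ∈ ℂ : |z| ≤ 1}, with Taylor expansion f(z) = Σ_{j=1}^∞ c_j·z^j (so in particular f(0) = c_0 = 0). Then for every positive integer n the series Σ_{k=1}^∞ (μ(k)/(k·n))·Σ_{m=1}^{k·n} f(e^{2πim/(k·n)}) converges and equals c_n. -/
open Filter ArithmeticFunction Real

/-!
Averaging `f` over the `N`-th roots of unity kills every Taylor coefficient `c_j` with `N ∤ j`:
`(1/N) ∑_m f(e^{2πim/N}) = ∑_{N ∣ j} c_j`. So the `k`-th term of the series is the `k`-th row sum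
of the double series `μ(k) c_j [kn ∣ j]`. Summing by columns instead, `∑_{kn ∣ j} μ(k) = [j = n]`
leaves only `c_n`. The interchange is legitimate because `f` is holomorphic on a disc of radius
`> 1`, so the Cauchy estimates make `c_j` decay geometrically.
-/

theorem sum_Icc_exp_two_pi_I_mul_pow {N : ℕ} (hN : N ≠ 0) (t : ℕ) :
    ∑ m ∈ Finset.Icc 1 N, Complex.exp (2 * π * Complex.I * m / N) ^ t =
      if N ∣ t then (N : ℂ) else 0 := by
  set ζ := Complex.exp (2 * π * Complex.I / N)
  have hζ : IsPrimitiveRoot ζ N := Complex.isPrimitiveRoot_exp N hN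
  have hpow (m : ℕ) : Complex.exp (2 * π * Complex.I * m / N) ^ t = (ζ ^ t) ^ m := by
    rw [← Complex.exp_nat_mul, ← pow_mul, ← Complex.exp_nat_mul]
    push_cast
    ring_nf
  simp_rw [hpow]
  split_ifs with h
  · simp [(hζ.pow_eq_one_iff_dvd t).2 h]
  · have hw : ζ ^ t ≠ 1 := mt (hζ.pow_eq_one_iff_dvd t).1 h
    have hwN : (ζ ^ t) ^ N = 1 := by rw [← pow_mul, mul_comm, pow_mul, hζ.pow_eq_one, one_pow]
    rw [← Finset.Ico_add_one_right_eq_Icc, geom_sum_Ico hw (by omega), pow_succ, hwN, one_mul,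
      pow_one, sub_self, zero_div]

theorem hasSum_sum_exp_two_pi_I_mul {ι : Type*} {f : ℂ → ℂ} {a : ι → ℂ} {e : ι → ℕ}
    (hf : ∀ z : ℂ, ‖z‖ = 1 → HasSum (fun i => a i * z ^ e i) (f z)) {N : ℕ} (hN : N ≠ 0) :
    HasSum (fun i => if N ∣ e i then N * a i else 0)
      (∑ m ∈ Finset.Icc 1 N, f (Complex.exp (2 * π * Complex.I * m / N))) := by
  have hnorm (m : ℕ) : ‖Complex.exp (2 * π * Complex.I * m / N)‖ = 1 := by
    rw [Complex.norm_exp]; simp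
  convert hasSum_sum (s := Finset.Icc 1 N) fun m _ => hf _ (hnorm m) using 1
  ext i
  rw [← Finset.mul_sum, sum_Icc_exp_two_pi_I_mul_pow hN, mul_ite, mul_zero, mul_comm]

theorem hasSum_moebius_mul_dvd {R : Type*} [Ring R] [TopologicalSpace R] {n s : ℕ}
    (hn : n ≠ 0) (hs : s ≠ 0) :
    HasSum (fun k => if k * n ∣ s then (moebius k : R) else 0) (if s = n then 1 else 0) := by
  by_cases hns : n ∣ s
  · obtain ⟨q, rfl⟩ := hns
    have hq : q ≠ 0 := right_ne_zero_of_mul hs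
    have hdvd (k : ℕ) : k * n ∣ n * q ↔ k ∣ q := by
      rw [mul_comm k n, Nat.mul_dvd_mul_iff_left (Nat.pos_of_ne_zero hn)]
    simp_rw [hdvd, Nat.mul_eq_left hn]
    have hmoebius : ∑ k ∈ q.divisors, (if k ∣ q then (moebius k : R) else 0) =
        if q = 1 then 1 else 0 := by
      rw [Finset.sum_ite_of_true fun k hk => Nat.dvd_of_mem_divisors hk]
      simpa only [coe_mul_zeta_apply, intCoe_apply, one_apply] using
        congrArg (· q) (coe_moebius_mul_coe_zeta (R := R))
    rw [← hmoebius]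
    exact hasSum_sum_of_ne_finset_zero fun k hk => by simp_all
  · have hzero (k : ℕ) : ¬ k * n ∣ s := fun h => hns ((dvd_mul_left n k).trans h)
    simp only [hzero, if_false]
    rw [if_neg (by rintro rfl; exact hns dvd_rfl)]
    exact hasSum_zero

theorem hasFPowerSeriesOnBall_ofScalars_of_hasSum {f : ℂ → ℂ} {a : ℕ → ℂ} {r : NNReal}
    (hr : 0 < r) (hf : ∀ z ∈ Metric.closedBall (0 : ℂ) r, HasSum (fun j => a j * z ^ j) (f z)) :
    HasFPowerSeriesOnBall f (FormalMultilinearSeries.ofScalars ℂ a) 0 r where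
  r_le := by
    refine FormalMultilinearSeries.le_radius_of_tendsto _ (l := 0) ?_
    simpa [FormalMultilinearSeries.ofScalars_norm] using
      (hf r (by simp)).summable.tendsto_atTop_zero.norm
  r_pos := by exact_mod_cast hr
  hasSum {y} hy := by
    rw [Metric.eball_coe] at hy
    simpa [FormalMultilinearSeries.ofScalars_apply_eq, mul_comm] using
      hf y (Metric.ball_subset_closedBall hy)

theorem HasFPowerSeriesAt.exists_gt_norm_le_inv_pow {E : Type*} [NormedAddCommGroup E]
    [NormedSpace ℂ E] [CompleteSpace E] {f : ℂ → E} {p : FormalMultilinearSeries ℂ ℂ E}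
    {x : ℂ} {r : ℝ} {U : Set ℂ} (hp : HasFPowerSeriesAt f p x) (hU : IsOpen U) (hr : 0 ≤ r)
    (hrU : Metric.closedBall x r ⊆ U) (hf : DifferentiableOn ℂ f U) :
    ∃ R > r, ∃ C, ∀ j, ‖p j‖ ≤ C * R⁻¹ ^ j := by
  obtain ⟨ε, hε, hεU⟩ := (isCompact_closedBall x r).exists_cthickening_subset_open hU hrU
  rw [cthickening_closedBall hε.le hr] at hεU
  obtain ⟨R, hR⟩ : ∃ R : NNReal, (R : ℝ) = ε + r := ⟨⟨ε + r, by positivity⟩, rfl⟩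
  rw [← hR] at hεU
  have hcauchy :=
    (hf.mono hεU).hasFPowerSeriesOnBall (R := R) (by rw [← NNReal.coe_pos]; linarith)
  obtain rfl := hp.eq_formalMultilinearSeries hcauchy.hasFPowerSeriesAt
  exact ⟨R, by linarith, (2 * π)⁻¹ * ∫ θ in 0..2 * π, ‖f (circleMap x R θ)‖,
    fun j => by simpa using norm_cauchyPowerSeries_le f x R j⟩

theorem exists_norm_le_geometric_of_hasSum {f : ℂ → ℂ} {a : ℕ → ℂ} {U : Set ℂ} (hU : IsOpen U)
    (hUball : Metric.closedBall (0 : ℂ) 1 ⊆ U) (hf : DifferentiableOn ℂ f U)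
    (ha : ∀ z ∈ Metric.closedBall (0 : ℂ) 1, HasSum (fun j => a j * z ^ j) (f z)) :
    ∃ C q : ℝ, 0 ≤ q ∧ q < 1 ∧ ∀ j, ‖a j‖ ≤ C * q ^ j := by
  have hp :=
    (hasFPowerSeriesOnBall_ofScalars_of_hasSum one_pos (by simpa using ha)).hasFPowerSeriesAt
  obtain ⟨R, hR, C, hC⟩ := hp.exists_gt_norm_le_inv_pow hU zero_le_one hUball hf
  exact ⟨C, R⁻¹, by positivity, inv_lt_one_of_one_lt₀ hR, fun j => by
    simpa [FormalMultilinearSeries.ofScalars_norm] using hC j⟩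

theorem Summable.hasSum_of_hasSum_fiberwise_swap {α β γ : Type*} [AddCommMonoid α]
    [TopologicalSpace α] [ContinuousAdd α] [T3Space α]
    {F : β × γ → α} {r : β → α} {s : γ → α} {L : α} (hF : Summable F)
    (hr : ∀ b, HasSum (fun c => F (b, c)) (r b)) (hs : ∀ c, HasSum (fun b => F (b, c)) (s c))
    (hL : HasSum s L) : HasSum r L := by
  have hcols := hF.prod_symm.hasSum.prod_fiberwise hs
  rw [show ∑' p : γ × β, F p.swap = ∑' p, F p from (Equiv.prodComm γ β).tsum_eq F] at hcols
  exact hL.unique hcols ▸ hF.hasSum.prod_fiberwise hr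

theorem HasSum.tendsto_sum_Icc_one {α : Type*} [AddCommMonoid α] [TopologicalSpace α]
    {t : ℕ → α} {L : α} (h : HasSum t L) (h0 : t 0 = 0) :
    Tendsto (fun N => ∑ k ∈ Finset.Icc 1 N, t k) atTop (nhds L) := by
  refine (h.tendsto_sum_nat.comp (tendsto_add_atTop_nat 1)).congr fun N => ?_
  rw [Function.comp_apply, Nat.range_succ_eq_Icc_zero,
    ← Finset.insert_Icc_add_one_left_eq_Icc N.zero_le, Finset.sum_insert (by simp), h0,
    _root_.zero_add]
  rfl

/-- The double series `μ(k) c_j [kn ∣ j]`, with `j + 1` in place of `j` as in the expansion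
`∑ c_{j+1} z^{j+1}`. -/
def aftTerm (c : ℕ → ℂ) (n : ℕ) (p : ℕ × ℕ) : ℂ :=
  if p.1 * n ∣ p.2 + 1 then moebius p.1 * c (p.2 + 1) else 0

theorem summable_aftTerm {c : ℕ → ℂ} {n : ℕ} (hn : n ≠ 0) {C q : ℝ} (hq0 : 0 ≤ q) (hq1 : q < 1)
    (hc : ∀ j, ‖c (j + 1)‖ ≤ C * q ^ (j + 1)) : Summable (aftTerm c n) := by
  set b := √q
  have hb0 : 0 ≤ b := Real.sqrt_nonneg q
  have hb1 : b < 1 := by simpa using Real.sqrt_lt_sqrt hq0 hq1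
  have hgeom := summable_geometric_of_lt_one hb0 hb1
  refine Summable.of_norm_bounded (hgeom.mul_of_nonneg (hgeom.mul_left |C|)
    (fun k => by positivity) (fun j => by positivity)) fun ⟨k, j⟩ => ?_
  unfold aftTerm
  split_ifs with hdvd
  · have hk : k ≤ j + 1 :=
      (Nat.le_mul_of_pos_right k (Nat.pos_of_ne_zero hn)).trans (Nat.le_of_dvd j.succ_pos hdvd)
    have hμ : ‖(moebius k : ℂ)‖ ≤ 1 := by
      rw [Complex.norm_intCast]; exact_mod_cast abs_moebius_le_one
    calc ‖(moebius k : ℂ) * c (j + 1)‖ ≤ 1 * (|C| * q ^ (j + 1)) := by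
          rw [norm_mul]
          gcongr
          exact (hc j).trans (by gcongr; exact le_abs_self C)
      _ = |C| * (b ^ (j + 1) * b ^ (j + 1)) := by
          rw [one_mul, ← mul_pow, Real.mul_self_sqrt hq0]
      _ ≤ |C| * (b ^ k * b ^ j) := by
          gcongr |C| * (?_ * ?_) <;> exact pow_le_pow_of_le_one hb0 hb1.le (by omega)
      _ = b ^ k * (|C| * b ^ j) := by ring
  · rw [norm_zero]; positivity

theorem hasSum_aftTerm_row {f : ℂ → ℂ} {c : ℕ → ℂ}
    (hc : ∀ z : ℂ, ‖z‖ = 1 → HasSum (fun j => c (j + 1) * z ^ (j + 1)) (f z))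
    {n : ℕ} (hn : n ≠ 0) (k : ℕ) :
    HasSum (fun j => aftTerm c n (k, j))
      (((moebius k : ℂ) / (k * n)) *
        ∑ m ∈ Finset.Icc 1 (k * n), f (Complex.exp (2 * π * Complex.I * m / (k * n)))) := by
  rcases eq_or_ne k 0 with rfl | hk
  · simp [aftTerm]
  have hkn : ((k * n : ℕ) : ℂ) ≠ 0 := Nat.cast_ne_zero.2 (mul_ne_zero hk hn)
  have h := (hasSum_sum_exp_two_pi_I_mul (a := fun j => c (j + 1)) hc (mul_ne_zero hk hn)).mul_left
    ((moebius k : ℂ) / (k * n))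
  push_cast at h hkn
  refine h.congr_fun fun j => ?_
  rw [aftTerm, mul_ite, mul_zero]
  congr 1
  field_simp

theorem hasSum_aftTerm_column (c : ℕ → ℂ) {n : ℕ} (hn : n ≠ 0) (j : ℕ) :
    HasSum (fun k => aftTerm c n (k, j)) (if j + 1 = n then c n else 0) := by
  have hterm : (fun k => aftTerm c n (k, j)) =
      fun k => (if k * n ∣ j + 1 then (moebius k : ℂ) else 0) * c (j + 1) := by
    ext k
    simp only [aftTerm, ite_mul, zero_mul]
  have hval : (if j + 1 = n then c n else 0) = (if j + 1 = n then 1 else 0) * c (j + 1) := by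
    split_ifs with h <;> simp [h]
  rw [hterm, hval]
  exact (hasSum_moebius_mul_dvd (R := ℂ) hn (Nat.add_one_ne_zero j)).mul_right _

/-- **AFT for Taylor coefficients of analytic functions (Theorem 5).**
If `f` is analytic on an open set containing the closed unit disk, with Taylor
expansion `f(z) = ∑_{j=1}^∞ c_j·z^j`, then for every `n ≥ 1` the series
`∑_{k=1}^∞ (μ(k)/(kn))·∑_{m=1}^{kn} f(e^{2πim/(kn)})` converges to `c_n`. -/
theorem AFT_taylor_coefficients_analytic_closedBall
    (f : ℂ → ℂ) (c : ℕ → ℂ) (U : Set ℂ)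
    (hU : IsOpen U) (hUball : Metric.closedBall (0 : ℂ) 1 ⊆ U)
    (hf : AnalyticOnNhd ℂ f U)
    (hc : ∀ z ∈ Metric.closedBall (0 : ℂ) 1,
      HasSum (fun j : ℕ => c (j + 1) * z ^ (j + 1)) (f z)) :
    ∀ n : ℕ, 1 ≤ n →
      Tendsto
        (fun N : ℕ => ∑ k ∈ Finset.Icc 1 N,
          ((moebius k : ℂ) / (k * n)) *
            ∑ m ∈ Finset.Icc 1 (k * n),
              f (Complex.exp (2 * π * Complex.I * m / (k * n))))
        atTop (nhds (c n)) := by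
  intro n hn
  have hn0 : n ≠ 0 := Nat.one_le_iff_ne_zero.1 hn
  have hc₀ (z) (hz : z ∈ Metric.closedBall (0 : ℂ) 1) :
      HasSum (fun j => Function.update c 0 0 j * z ^ j) (f z) :=
    (hasSum_nat_add_iff' 1).1 (by simpa using hc z hz)
  obtain ⟨C, q, hq0, hq1, hdecay⟩ :=
    exists_norm_le_geometric_of_hasSum hU hUball hf.differentiableOn hc₀
  have hsum := (summable_aftTerm hn0 hq0 hq1 fun j => by simpa using hdecay (j + 1))
    |>.hasSum_of_hasSum_fiberwise_swap
      (hasSum_aftTerm_row (fun z hz => hc z (by simp [hz])) hn0)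
      (hasSum_aftTerm_column c hn0)
      (by convert hasSum_ite_eq (n - 1) (c n) using 2 with j; exact if_congr (by omega) rfl rfl)
  exact hsum.tendsto_sum_Icc_one (by simp)
end

section
/- Fix 0 < b < π and let f_b : ℝ → ℝ be the 2π-periodic even function defined on [−π, π] by f_b(θ) = 1 − b/π for |θ| < b, f_b(θ) = 1/2 − b/π for θ = ±b, and f_b(θ) = −b/π for b < |θ| ≤ π. Then for every positive integer N, Σ_{m=0}^{N−1} f_b(2πm/N) = −2·{b·N/(2π)}, where {t} denotes the first Bernoullian function. -/
open Real

/-- The first Bernoullian function: `{t} = t − ⌊t⌋ − 1/2` if `t` is not an integer,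
and `{t} = 0` if `t` is an integer. -/
noncomputable def bernoullianFrac (t : ℝ) : ℝ :=
  if t = ⌊t⌋ then 0 else t - ⌊t⌋ - 1 / 2

/-- **Sample sums of the basic even step-function.**
Fix `0 < b < π` and let `f_b` be the `2π`-periodic even function equal to `1 − b/π` on
`|θ| < b`, `1/2 − b/π` at `θ = ±b`, and `−b/π` for `b < |θ| ≤ π`. Then for every
`N ≥ 1`, `∑_{m=0}^{N−1} f_b(2πm/N) = −2·{bN/(2π)}`. -/
theorem sample_sum_eq_neg_two_bernoullianFrac
    (b : ℝ) (hb0 : 0 < b) (hbπ : b < π)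
    (f : ℝ → ℝ)
    (hper : Function.Periodic f (2 * π))
    (h1 : ∀ θ : ℝ, |θ| < b → f θ = 1 - b / π)
    (h2 : f b = 1 / 2 - b / π ∧ f (-b) = 1 / 2 - b / π)
    (h3 : ∀ θ : ℝ, b < |θ| → |θ| ≤ π → f θ = -(b / π)) :
    ∀ N : ℕ, 1 ≤ N →
      ∑ m ∈ Finset.range N, f (2 * π * m / N) =
        -2 * bernoullianFrac (b * N / (2 * π)) := by
  intro N hN
  have hπ := Real.pi_pos
  have hπ' : π ≠ 0 := ne_of_gt hπ
  have hN0 : (0:ℝ) < N := by exact_mod_cast hN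
  have hN' : (N:ℝ) ≠ 0 := ne_of_gt hN0
  set x : ℝ := b * N / (2 * π) with hxdef
  have hx0 : 0 < x := by positivity
  have hxN : 2 * x < N := by
    have h2x : 2 * x = b * N / π := by rw [hxdef]; field_simp
    rw [h2x, div_lt_iff₀ hπ]
    nlinarith
  have hc : (0:ℝ) < 2 * π / N := by positivity
  have hb_eq : 2 * π / N * x = b := by
    rw [hxdef]; field_simp
  have h2π : 2 * π / N * N = 2 * π := by field_simp
  have hNb : (N:ℝ) * (b / π) = 2 * x := by
    rw [hxdef]; field_simp
  -- pointwise evaluation of the summand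
  have key : ∀ m ∈ Finset.range N, f (2 * π * m / N) =
      -(b / π) + (((if (m:ℝ) < x then (1:ℝ) else 0) + (if (m:ℝ) = x then (1:ℝ)/2 else 0)) +
        ((if (N:ℝ) - x < (m:ℝ) then (1:ℝ) else 0) +
          (if (m:ℝ) = (N:ℝ) - x then (1:ℝ)/2 else 0))) := by
    intro m hm
    rw [Finset.mem_range] at hm
    have hmN : (m:ℝ) < N := by exact_mod_cast hm
    set θ : ℝ := 2 * π * m / N with hθdef
    have hθ : θ = 2 * π / N * m := by rw [hθdef]; ring
    have hθ0 : 0 ≤ θ := by positivity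
    have hθ2π : θ < 2 * π := by
      rw [hθ]
      have h := (mul_lt_mul_iff_right₀ hc).mpr hmN
      rwa [h2π] at h
    have e1 : θ < b ↔ (m:ℝ) < x := by rw [hθ, ← hb_eq]; exact mul_lt_mul_iff_right₀ hc
    have e2 : θ = b ↔ (m:ℝ) = x := by rw [hθ, ← hb_eq]; exact mul_right_inj' (ne_of_gt hc)
    have h2πb : 2 * π - b = 2 * π / N * ((N:ℝ) - x) := by rw [mul_sub, h2π, hb_eq]
    have e3 : 2 * π - b < θ ↔ (N:ℝ) - x < (m:ℝ) := by
      rw [hθ, h2πb]; exact mul_lt_mul_iff_right₀ hc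
    have e4 : θ = 2 * π - b ↔ (m:ℝ) = (N:ℝ) - x := by
      rw [hθ, h2πb]; exact mul_right_inj' (ne_of_gt hc)
    have hb2 : b < 2 * π - b := by linarith
    rcases lt_trichotomy θ b with h | h | h
    · rw [h1 θ (by rwa [abs_of_nonneg hθ0])]
      rw [if_pos (e1.1 h), if_neg (fun hc' => by have := e2.2 hc'; linarith),
        if_neg (fun hc' => by have := e3.2 hc'; linarith),
        if_neg (fun hc' => by have := e4.2 hc'; linarith)]
      ring
    · rw [h, h2.1]
      rw [if_neg (fun hc' => by have := e1.2 hc'; linarith),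
        if_pos (e2.1 h),
        if_neg (fun hc' => by have := e3.2 hc'; linarith),
        if_neg (fun hc' => by have := e4.2 hc'; linarith)]
      ring
    · rcases lt_trichotomy θ (2 * π - b) with h' | h' | h'
      · have hf : f θ = -(b / π) := by
          rcases le_or_gt θ π with hle | hgt
          · exact h3 θ (by rwa [abs_of_nonneg hθ0]) (by rwa [abs_of_nonneg hθ0])
          · have hper' : f θ = f (θ - 2 * π) := by
              have h := hper (θ - 2 * π)
              rw [sub_add_cancel] at h
              exact h
            rw [hper']
            have habs : |θ - 2 * π| = 2 * π - θ := by
              rw [abs_of_neg (by linarith)]; ring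
            exact h3 _ (by rw [habs]; linarith) (by rw [habs]; linarith)
        rw [hf, if_neg (fun hc' => by have := e1.2 hc'; linarith),
          if_neg (fun hc' => by have := e2.2 hc'; linarith),
          if_neg (fun hc' => by have := e3.2 hc'; linarith),
          if_neg (fun hc' => by have := e4.2 hc'; linarith)]
        ring
      · have hper' : f θ = f (θ - 2 * π) := by
          have h := hper (θ - 2 * π)
          rw [sub_add_cancel] at h
          exact h
        rw [hper', show θ - 2 * π = -b by linarith, h2.2]
        rw [if_neg (fun hc' => by have := e1.2 hc'; linarith),
          if_neg (fun hc' => by have := e2.2 hc'; linarith),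
          if_neg (fun hc' => by have := e3.2 hc'; linarith),
          if_pos (e4.1 h')]
        ring
      · have hper' : f θ = f (θ - 2 * π) := by
          have h := hper (θ - 2 * π)
          rw [sub_add_cancel] at h
          exact h
        have habs : |θ - 2 * π| = 2 * π - θ := by
          rw [abs_of_neg (by linarith)]; ring
        rw [hper', h1 _ (by rw [habs]; linarith)]
        rw [if_neg (fun hc' => by have := e1.2 hc'; linarith),
          if_neg (fun hc' => by have := e2.2 hc'; linarith),
          if_pos (e3.1 h'),
          if_neg (fun hc' => by have := e4.2 hc'; linarith)]
        ring
  rw [Finset.sum_congr rfl key]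
  simp only [Finset.sum_add_distrib, Finset.sum_const, Finset.card_range, nsmul_eq_mul]
  -- counting
  set K : ℕ := ⌈x⌉.toNat with hKdef
  have hceil : 0 < ⌈x⌉ := Int.ceil_pos.2 hx0
  have hK : (K:ℤ) = ⌈x⌉ := Int.toNat_of_nonneg hceil.le
  have hK1 : 1 ≤ K := by omega
  have hKN : K ≤ N := by
    have h : ⌈x⌉ ≤ (N:ℤ) := Int.ceil_le.2 (by push_cast; linarith)
    omega
  have hcond1 : ∀ m : ℕ, ((m:ℝ) < x ↔ m < K) := by
    intro m
    constructor
    · intro h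
      have h2 : ((m:ℤ):ℝ) < x := by push_cast; exact h
      have h3 := Int.lt_ceil.mpr h2
      omega
    · intro h
      have h3 : (m:ℤ) < (K:ℤ) := by exact_mod_cast h
      rw [hK] at h3
      have h4 := Int.lt_ceil.mp h3
      push_cast at h4
      exact h4
  have hcond3 : ∀ m : ℕ, ((N:ℝ) - x < (m:ℝ) ↔ N < m + K) := by
    intro m
    constructor
    · intro h
      have h2 : (((N:ℤ) - m : ℤ):ℝ) < x := by push_cast; linarith
      have h3 := Int.lt_ceil.mpr h2
      omega
    · intro h
      have h3 : ((N:ℤ) - m : ℤ) < (K:ℤ) := by omega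
      rw [hK] at h3
      have h4 := Int.lt_ceil.mp h3
      push_cast at h4
      linarith
  have hS1 : (∑ m ∈ Finset.range N, if (m:ℝ) < x then (1:ℝ) else 0) = K := by
    rw [Finset.sum_congr rfl (fun m _ => if_congr (hcond1 m) rfl rfl), Finset.sum_boole]
    have h : (Finset.range N).filter (fun m => m < K) = Finset.range K := by
      ext a; simp [Finset.mem_filter, Finset.mem_range]; omega
    rw [h, Finset.card_range]
  have hS3 : (∑ m ∈ Finset.range N, if (N:ℝ) - x < (m:ℝ) then (1:ℝ) else 0)
      = ((K - 1 : ℕ) : ℝ) := by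
    rw [Finset.sum_congr rfl (fun m _ => if_congr (hcond3 m) rfl rfl), Finset.sum_boole]
    have h : (Finset.range N).filter (fun m => N < m + K) = Finset.Ico (N + 1 - K) N := by
      ext a; simp [Finset.mem_filter, Finset.mem_range, Finset.mem_Ico]; omega
    rw [h, Nat.card_Ico]
    congr 1
    omega
  have hKm1 : ((K - 1 : ℕ) : ℝ) = (K:ℝ) - 1 := by
    rw [Nat.cast_sub hK1, Nat.cast_one]
  rw [hS1, hS3]
  by_cases hcase : x = (⌊x⌋ : ℝ)
  · -- integer case
    have hfc : ⌈x⌉ = ⌊x⌋ := by rw [hcase]; simp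
    have hxK : x = (K:ℝ) := by
      have h5 : (K:ℤ) = ⌊x⌋ := hK.trans hfc
      rw [hcase]
      exact_mod_cast h5.symm
    have hKltN : 2 * K < N := by
      have : 2 * (K:ℝ) < N := by rw [← hxK]; exact hxN
      exact_mod_cast this
    have hS2 : (∑ m ∈ Finset.range N, if (m:ℝ) = x then (1:ℝ)/2 else 0) = 1/2 := by
      have hcond2 : ∀ m : ℕ, ((m:ℝ) = x ↔ m = K) := by
        intro m; rw [hxK]; exact_mod_cast Iff.rfl
      rw [Finset.sum_congr rfl (fun m _ => if_congr (hcond2 m) rfl rfl),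
        Finset.sum_ite_eq' (Finset.range N) K (fun _ => (1:ℝ)/2)]
      rw [if_pos (Finset.mem_range.2 (by omega))]
    have hS4 : (∑ m ∈ Finset.range N, if (m:ℝ) = (N:ℝ) - x then (1:ℝ)/2 else 0) = 1/2 := by
      have hcond4 : ∀ m : ℕ, ((m:ℝ) = (N:ℝ) - x ↔ m = N - K) := by
        intro m
        rw [hxK]
        constructor
        · intro h
          have h2 : (m:ℝ) + K = N := by linarith
          have h3 : m + K = N := by exact_mod_cast h2
          omega
        · intro h
          have h3 : m + K = N := by omega
          have h2 : (m:ℝ) + K = N := by exact_mod_cast h3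
          linarith
      rw [Finset.sum_congr rfl (fun m _ => if_congr (hcond4 m) rfl rfl),
        Finset.sum_ite_eq' (Finset.range N) (N - K) (fun _ => (1:ℝ)/2)]
      rw [if_pos (Finset.mem_range.2 (by omega))]
    rw [hS2, hS4]
    rw [bernoullianFrac, if_pos hcase]
    rw [hKm1]
    have hxKr : x = (K:ℝ) := hxK
    linarith [hNb]
  · -- non-integer case
    have hfl : ⌊x⌋ < x := lt_of_le_of_ne (Int.floor_le x) (fun h => hcase h.symm)
    have hce : ⌈x⌉ = ⌊x⌋ + 1 := by
      rw [Int.ceil_eq_iff]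
      constructor
      · push_cast; linarith
      · push_cast; linarith [Int.lt_floor_add_one x]
    have hKfl : (K:ℝ) = (⌊x⌋:ℝ) + 1 := by
      have h5 : (K:ℤ) = ⌊x⌋ + 1 := hK.trans hce
      exact_mod_cast h5
    have hS2 : (∑ m ∈ Finset.range N, if (m:ℝ) = x then (1:ℝ)/2 else 0) = 0 := by
      apply Finset.sum_eq_zero
      intro m _
      rw [if_neg]
      intro h
      apply hcase
      rw [← h]
      simp
    have hS4 : (∑ m ∈ Finset.range N, if (m:ℝ) = (N:ℝ) - x then (1:ℝ)/2 else 0) = 0 := by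
      apply Finset.sum_eq_zero
      intro m _
      rw [if_neg]
      intro h
      apply hcase
      rw [show x = (((N:ℤ) - m : ℤ):ℝ) by push_cast; linarith]
      simp
    rw [hS2, hS4]
    rw [bernoullianFrac, if_neg hcase]
    rw [hKm1]
    linarith [hNb]
end

section
/- Suppose that the partial sums Σ_{k=1}^{N} (μ(k)/k)·{kθ} converge uniformly in θ ∈ ℝ to −(1/π)·sin(2πθ) as N → ∞ (the Davenport formula). Then the series Σ_{k=1}^∞ μ(k)/k converges and Σ_{k=1}^∞ μ(k)/k = 0. -/
open Filter ArithmeticFunction Real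

/-- **Davenport's formula implies `∑ μ(k)/k = 0`.**
If the partial sums `∑_{k=1}^N (μ(k)/k)·{kθ}` converge uniformly in `θ` to
`−(1/π)·sin(2πθ)`, then the series `∑_{k=1}^∞ μ(k)/k` converges and equals `0`. -/
theorem sum_moebius_div_eq_zero_of_davenport
    (hdav : TendstoUniformly
      (fun N : ℕ => fun θ : ℝ =>
        ∑ k ∈ Finset.Icc 1 N, ((moebius k : ℝ) / k) * bernoullianFrac (k * θ))
      (fun θ : ℝ => -(1 / π) * Real.sin (2 * π * θ)) atTop) :
    Tendsto (fun N : ℕ => ∑ k ∈ Finset.Icc 1 N, (moebius k : ℝ) / k)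
      atTop (nhds 0) := by
  set θ : ℕ → ℝ := fun N => 1 / ((N + 1 : ℝ) ^ 2) with hθdef
  have hθpos : ∀ N, 0 < θ N := by intro N; positivity
  have hθle : ∀ N, θ N ≤ 1 / ((N : ℝ) + 1) := by
    intro N
    rw [hθdef]
    have h1 : (0:ℝ) < (N : ℝ) + 1 := by positivity
    rw [div_le_div_iff₀ (by positivity) h1]
    nlinarith
  have hθ0 : Tendsto θ atTop (nhds 0) := by
    apply squeeze_zero (fun N => (hθpos N).le) hθle
    exact tendsto_one_div_add_atTop_nhds_zero_nat
  -- key identity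
  have key : ∀ N : ℕ, ∑ k ∈ Finset.Icc 1 N, (moebius k : ℝ) / k
      = 2 * (θ N * ∑ k ∈ Finset.Icc 1 N, (moebius k : ℝ))
        - 2 * ∑ k ∈ Finset.Icc 1 N, ((moebius k : ℝ) / k) * bernoullianFrac (k * θ N) := by
    intro N
    have hterm : ∀ k ∈ Finset.Icc 1 N,
        ((moebius k : ℝ) / k) * bernoullianFrac (k * θ N)
          = (moebius k : ℝ) * θ N - ((moebius k : ℝ) / k) * (1 / 2) := by
      intro k hk
      obtain ⟨hk1, hk2⟩ := Finset.mem_Icc.mp hk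
      have hkpos : (0:ℝ) < k := by exact_mod_cast hk1
      have ht0 : 0 < (k : ℝ) * θ N := by positivity
      have ht1 : (k : ℝ) * θ N < 1 := by
        have hkN : (k : ℝ) ≤ N := by exact_mod_cast hk2
        have : (k : ℝ) * θ N ≤ (N : ℝ) * θ N :=
          mul_le_mul_of_nonneg_right hkN (hθpos N).le
        have h2 : (N : ℝ) * θ N < 1 := by
          rw [hθdef]
          rw [mul_one_div, div_lt_one (by positivity)]
          nlinarith
        linarith
      have hfloor : ⌊(k : ℝ) * θ N⌋ = 0 := Int.floor_eq_zero_iff.mpr ⟨ht0.le, ht1⟩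
      unfold bernoullianFrac
      rw [hfloor, if_neg (by push_cast; linarith)]
      push_cast
      field_simp
      ring
    rw [Finset.sum_congr rfl hterm, Finset.sum_sub_distrib]
    rw [← Finset.sum_mul, ← Finset.sum_mul]
    ring
  -- limit of θ N * M N
  have h1 : Tendsto (fun N => θ N * ∑ k ∈ Finset.Icc 1 N, (moebius k : ℝ))
      atTop (nhds 0) := by
    refine squeeze_zero_norm ?_ tendsto_one_div_add_atTop_nhds_zero_nat
    · intro N
      have hM : ‖∑ k ∈ Finset.Icc 1 N, (moebius k : ℝ)‖ ≤ (N : ℝ) := by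
        calc ‖∑ k ∈ Finset.Icc 1 N, (moebius k : ℝ)‖
            ≤ ∑ k ∈ Finset.Icc 1 N, ‖(moebius k : ℝ)‖ := norm_sum_le _ _
          _ ≤ ∑ k ∈ Finset.Icc 1 N, 1 := by
              apply Finset.sum_le_sum
              intro k _
              rw [Real.norm_eq_abs, ← Int.cast_abs]
              exact_mod_cast abs_moebius_le_one
          _ = (N : ℝ) := by simp
      rw [norm_mul]
      have hθn : ‖θ N‖ = θ N := Real.norm_of_nonneg (hθpos N).le
      calc ‖θ N‖ * ‖∑ k ∈ Finset.Icc 1 N, (moebius k : ℝ)‖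
          ≤ θ N * (N : ℝ) := by
            rw [hθn]; exact mul_le_mul_of_nonneg_left hM (hθpos N).le
        _ ≤ 1 / ((N : ℝ) + 1) := by
            rw [hθdef]
            rw [div_mul_eq_mul_div, div_le_div_iff₀ (by positivity) (by positivity)]
            nlinarith [Nat.cast_nonneg (α := ℝ) N]
  -- limit of f N (θ N)
  have hcont : ContinuousAt (fun θ : ℝ => -(1 / π) * Real.sin (2 * π * θ)) 0 := by
    fun_prop
  have h2 : Tendsto (fun N => ∑ k ∈ Finset.Icc 1 N,
      ((moebius k : ℝ) / k) * bernoullianFrac (k * θ N)) atTop (nhds 0) := by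
    have := hdav.tendsto_comp hcont hθ0
    simpa using this
  simpa using ((h1.const_mul 2).sub (h2.const_mul 2)).congr (fun N => (key N).symm)
end

section
/- Let N be a positive integer and let F : ℝ → ℝ be the trigonometric polynomial F(t) = Σ_{n=1}^{N} A_n·cos(2πnt + θ_n) with real amplitudes A_n and phases θ_n (so F has period 1 and zero mean). For each positive integer k define s_k(t) = (1/k)·Σ_{m=0}^{k−1} F(t − m/k). Then s_k = 0 identically for all k > N, and for every n with 1 ≤ n ≤ N and every t ∈ ℝ, A_n·cos(2πnt + θ_n) = Σ_{k=1}^{∞} μ(k)·s_{k·n}(t) = Σ_{k=1}^{∞} (μ(k)/(k·n))·Σ_{m=0}^{k·n−1} F(t − m/(k·n)), where all but finitely many terms of the series vanish. -/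
/-!
Averaging over the `k` shifts `t - m/k` multiplies the harmonic `cos (2πdt + θ)` by the sum of the
`d`-th powers of the `k`-th roots of unity, which is `k` if `k ∣ d` and `0` otherwise. Hence `s_k`
is the part of `F` made of the harmonics whose frequency is a multiple of `k`; in particular
`s_k = 0` for `k > N`. Summing `μ(k) s_{kn}` then counts the harmonic of frequency `d = ne` with
weight `∑_{k ∣ e} μ(k) = [e = 1]`, leaving only the `n`-th one.
-/

open ArithmeticFunction Real

theorem IsPrimitiveRoot.geom_sum_pow_eq_ite {R : Type*} [CommRing R] [IsDomain R] {ζ : R}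
    {k : ℕ} (hζ : IsPrimitiveRoot ζ k) (n : ℕ) :
    ∑ m ∈ Finset.range k, (ζ ^ n) ^ m = if k ∣ n then (k : R) else 0 := by
  split_ifs with h
  · simp [(hζ.pow_eq_one_iff_dvd n).mpr h]
  · have hne : ζ ^ n ≠ 1 := fun h' => h ((hζ.pow_eq_one_iff_dvd n).mp h')
    refine eq_zero_of_ne_zero_of_mul_left_eq_zero (sub_ne_zero_of_ne hne.symm) ?_
    rw [mul_neg_geom_sum, ← pow_mul, mul_comm, pow_mul, hζ.pow_eq_one, one_pow, sub_self]

theorem sum_range_cos_sub_eq_ite (k n : ℕ) (x : ℝ) :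
    ∑ m ∈ Finset.range k, cos (x - 2 * π * n * m / k) = if k ∣ n then k * cos x else 0 := by
  rcases eq_or_ne k 0 with rfl | hk
  · simp
  have hζ := Complex.isPrimitiveRoot_exp k hk
  have hterm : ∀ m : ℕ, cos (x - 2 * π * n * m / k)
      = (Complex.exp (-x * Complex.I) * (Complex.exp (2 * π * Complex.I / k) ^ n) ^ m).re := by
    intro m
    rw [← pow_mul, ← Complex.exp_nat_mul, ← Complex.exp_add, ← cos_neg]
    convert (Complex.exp_ofReal_mul_I_re (-(x - 2 * π * n * m / k))).symm using 3
    push_cast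
    ring
  simp_rw [hterm, ← Complex.re_sum, ← Finset.mul_sum, hζ.geom_sum_pow_eq_ite]
  split_ifs
  · rw [mul_comm, ← Complex.ofReal_natCast, Complex.re_ofReal_mul, ← Complex.ofReal_neg,
      Complex.exp_ofReal_mul_I_re, cos_neg]
  · simp

noncomputable def trigPoly (S : Finset ℕ) (A θ : ℕ → ℝ) (t : ℝ) : ℝ :=
  ∑ n ∈ S, A n * cos (2 * π * n * t + θ n)

theorem trigPoly_average_shift (S : Finset ℕ) (A θ : ℕ → ℝ) {k : ℕ} (hk : k ≠ 0) (t : ℝ) :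
    1 / (k : ℝ) * ∑ m ∈ Finset.range k, trigPoly S A θ (t - m / k)
      = trigPoly {n ∈ S | k ∣ n} A θ t := by
  have hk' : (k : ℝ) ≠ 0 := Nat.cast_ne_zero.mpr hk
  have hshift : ∀ n m : ℕ, 2 * π * n * (t - m / k) + θ n
      = (2 * π * n * t + θ n) - 2 * π * n * m / k := fun n m => by ring
  simp only [trigPoly, hshift, Finset.sum_filter]
  rw [Finset.sum_comm, Finset.mul_sum]
  refine Finset.sum_congr rfl fun n _ => ?_
  rw [← Finset.mul_sum, sum_range_cos_sub_eq_ite]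
  split_ifs
  · field_simp
  · simp

theorem sum_divisors_moebius_smul {M : Type*} [AddCommGroup M] (e : ℕ) (x : M) :
    ∑ k ∈ e.divisors, moebius k • x = if e = 1 then x else 0 := by
  have h := congrArg (fun f : ArithmeticFunction ℤ => f e) moebius_mul_coe_zeta
  simp only [coe_mul_zeta_apply, one_apply] at h
  rw [← Finset.sum_smul, h, ite_smul, one_smul, zero_smul]

theorem hasSum_moebius_smul_ite_mul_dvd {M : Type*} [AddCommGroup M] [TopologicalSpace M]
    {d : ℕ} (hd : d ≠ 0) (n : ℕ) (x : M) :
    HasSum (fun k => if k * n ∣ d then moebius k • x else 0) (if d = n then x else 0) := by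
  by_cases hnd : n ∣ d
  · obtain ⟨e, rfl⟩ := hnd
    have hn : n ≠ 0 := left_ne_zero_of_mul hd
    have he : e ≠ 0 := right_ne_zero_of_mul hd
    have hdvd : ∀ k, k * n ∣ n * e ↔ k ∣ e := fun k => by
      rw [mul_comm k, Nat.mul_dvd_mul_iff_left (Nat.pos_of_ne_zero hn)]
    have hone : n * e = n ↔ e = 1 := mul_eq_left₀ hn
    simp only [hdvd, hone, ← sum_divisors_moebius_smul]
    have h : HasSum (fun k => if k ∣ e then moebius k • x else 0) _ :=
      hasSum_sum_of_ne_finset_zero (s := e.divisors)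
        fun k hk => if_neg fun h => hk (Nat.mem_divisors.mpr ⟨h, he⟩)
    rwa [Finset.sum_congr rfl fun k hk => if_pos (Nat.dvd_of_mem_divisors hk)] at h
  · have hne : d ≠ n := fun h => hnd (h ▸ dvd_rfl)
    simp only [hne, if_false]
    convert hasSum_zero with k
    exact if_neg fun h => hnd (dvd_trans (dvd_mul_left n k) h)

theorem hasSum_moebius_smul_sum_filter_mul_dvd {M : Type*} [AddCommGroup M] [TopologicalSpace M]
    [ContinuousAdd M] {S : Finset ℕ} (hS : 0 ∉ S) (f : ℕ → M) (n : ℕ) :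
    HasSum (fun k => moebius k • ∑ d ∈ S with k * n ∣ d, f d) (if n ∈ S then f n else 0) := by
  simp only [Finset.sum_filter, Finset.smul_sum, smul_ite, smul_zero, ← Finset.sum_ite_eq' S n f]
  exact hasSum_sum fun d hd => hasSum_moebius_smul_ite_mul_dvd (ne_of_mem_of_not_mem hd hS) n _

theorem AFT_signal_processing_general
    (N : ℕ) (A θ : ℕ → ℝ) (F : ℝ → ℝ)
    (hF : ∀ t : ℝ, F t = ∑ n ∈ Finset.Icc 1 N, A n * Real.cos (2 * π * n * t + θ n))
    (s : ℕ → ℝ → ℝ)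
    (hs : ∀ k : ℕ, 1 ≤ k → ∀ t : ℝ,
      s k t = (1 / (k : ℝ)) * ∑ m ∈ Finset.range k, F (t - (m : ℝ) / k)) :
    (∀ k : ℕ, N < k → ∀ t : ℝ, s k t = 0) ∧
    ∀ n : ℕ, 1 ≤ n → n ≤ N → ∀ t : ℝ,
      (∀ k : ℕ, 1 ≤ k → N < k * n → (moebius k : ℝ) * s (k * n) t = 0) ∧
      HasSum (fun k : ℕ => (moebius (k + 1) : ℝ) * s ((k + 1) * n) t)
        (A n * Real.cos (2 * π * n * t + θ n)) ∧
      HasSum (fun k : ℕ => ((moebius (k + 1) : ℝ) / ((k + 1) * n)) *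
          ∑ m ∈ Finset.range ((k + 1) * n), F (t - (m : ℝ) / ((k + 1) * n)))
        (A n * Real.cos (2 * π * n * t + θ n)) := by
  obtain rfl : F = trigPoly (Finset.Icc 1 N) A θ := funext hF
  have hs_filter : ∀ k, k ≠ 0 → ∀ t, s k t = trigPoly {d ∈ Finset.Icc 1 N | k ∣ d} A θ t :=
    fun k hk t => (hs k (Nat.one_le_iff_ne_zero.mpr hk) t).trans (trigPoly_average_shift _ A θ hk t)
  have hvanish : ∀ k, N < k → ∀ t, s k t = 0 := by
    intro k hk t
    rw [hs_filter k (by omega) t, Finset.filter_eq_empty_iff.mpr, trigPoly, Finset.sum_empty]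
    intro d hd hdvd
    obtain ⟨hd1, hdN⟩ := Finset.mem_Icc.mp hd
    exact absurd (Nat.le_of_dvd hd1 hdvd) (by omega)
  refine ⟨hvanish, fun n hn1 hnN t => ⟨fun k _ hk => by rw [hvanish _ hk, mul_zero], ?_⟩⟩
  have hsum : HasSum (fun k : ℕ => (moebius (k + 1) : ℝ) * s ((k + 1) * n) t)
      (A n * cos (2 * π * n * t + θ n)) := by
    have h := hasSum_moebius_smul_sum_filter_mul_dvd (S := Finset.Icc 1 N) (by simp)
      (fun d => A d * cos (2 * π * d * t + θ d)) n
    rw [if_pos (Finset.mem_Icc.mpr ⟨hn1, hnN⟩), ← hasSum_nat_add_iff' 1] at h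
    simpa [hs_filter, zsmul_eq_mul, trigPoly, show n ≠ 0 by omega] using h
  refine ⟨hsum, hsum.congr_fun fun k => ?_⟩
  rw [hs _ (Nat.mul_pos k.succ_pos hn1) t]
  push_cast
  ring

/-- **AFT in signal processing (Tufts–Sadasiv).**
Let `F(t) = ∑_{n=1}^N Aₙ·cos(2πnt + θₙ)` be a trigonometric polynomial and, for `k ≥ 1`,
let `s_k(t) = (1/k)·∑_{m=0}^{k−1} F(t − m/k)`. Then `s_k ≡ 0` for all `k > N`, and for
every `1 ≤ n ≤ N` and `t`,
`Aₙ·cos(2πnt + θₙ) = ∑_{k=1}^∞ μ(k)·s_{kn}(t)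
                   = ∑_{k=1}^∞ (μ(k)/(kn))·∑_{m=0}^{kn−1} F(t − m/(kn))`,
where all but finitely many terms of the series vanish. -/
theorem AFT_signal_processing
    (N : ℕ) (hN : 1 ≤ N) (A θ : ℕ → ℝ) (F : ℝ → ℝ)
    (hF : ∀ t : ℝ, F t = ∑ n ∈ Finset.Icc 1 N, A n * Real.cos (2 * π * n * t + θ n))
    (s : ℕ → ℝ → ℝ)
    (hs : ∀ k : ℕ, 1 ≤ k → ∀ t : ℝ,
      s k t = (1 / (k : ℝ)) * ∑ m ∈ Finset.range k, F (t - (m : ℝ) / k)) :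
    (∀ k : ℕ, N < k → ∀ t : ℝ, s k t = 0) ∧
    ∀ n : ℕ, 1 ≤ n → n ≤ N → ∀ t : ℝ,
      (∀ k : ℕ, 1 ≤ k → N < k * n → (moebius k : ℝ) * s (k * n) t = 0) ∧
      HasSum (fun k : ℕ => (moebius (k + 1) : ℝ) * s ((k + 1) * n) t)
        (A n * Real.cos (2 * π * n * t + θ n)) ∧
      HasSum (fun k : ℕ => ((moebius (k + 1) : ℝ) / ((k + 1) * n)) *
          ∑ m ∈ Finset.range ((k + 1) * n), F (t - (m : ℝ) / ((k + 1) * n)))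
        (A n * Real.cos (2 * π * n * t + θ n)) :=
  AFT_signal_processing_general N A θ F hF s hs
end
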